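/- arXiv:1810.10562 — 5 statements merged into one kernel-verified Lean document; each statement's English description precedes it below -/
import Mathlib

section
/- Let k, n be integers with 2 ≤ k ≤ n/2. Let A(k,n) be the ℂ-subalgebra of the polynomial ring ℂ[x_{cd} : 1 ≤ c ≤ k, 1 ≤ d ≤ n] generated by all maximal minors P(I) of the generic k × n matrix (x_{cd}) (where I ranges over k-subsets of ℤ/nℤ), let J be the ideal of A(k,n) generated by {P(I) − 1 : I a consecutive k-subset}, and let π : A(k,n) → A(k,n)/J be the quotient map. Then the specialised Plücker frieze is a tame SL_k-frieze over A(k,n)/J; explicitly: (i) for every r ∈ ℤ/nℤ and every m in the cyclic closed interval [r+k−1, r−1], the k × k matrix whose (i,j) entry (1 ≤ i,j ≤ k) is π(P([r+i−1]^{k−1} ∪ {m+j−1})) has determinant 1; and (ii) for every r ∈ ℤ/nℤ and every m in the cyclic closed interval [r+k, r−2], the (k+1) × (k+1) matrix whose (i,j) entry (1 ≤ i,j ≤ k+1) is π(P([r+i−1]^{k−1} ∪ {m+j−1})) has determinant 0. -/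
/-- Representative of `x : ZMod n` in `{1, …, n}`. -/
def rep (n : ℕ) (x : ZMod n) : ℕ := if x.val = 0 then n else x.val

/-- The cyclic segment `[r]^ℓ = {r, r+1, …, r+ℓ-1}` in `ZMod n`. -/
def cSeg (n : ℕ) (r : ZMod n) (ℓ : ℕ) : Finset (ZMod n) :=
  (Finset.range ℓ).image (fun t : ℕ => r + (t : ZMod n))

/-- The cyclic closed interval `[a,b] = {a, a+1, …, b}` in `ZMod n`. -/
def cIcc (n : ℕ) (a b : ZMod n) : Finset (ZMod n) := cSeg n a ((b - a).val + 1)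

/-- The Plücker coordinate `P(I)`: the determinant of the `k × k` submatrix of `M` on the
columns indexed by `I`, taken in increasing order of the representatives in `{1,…,n}`;
it is `0` if `I` is not a `k`-subset. -/
noncomputable def pluck {R : Type*} [CommRing R] {k n : ℕ}
    (M : Matrix (Fin k) (ZMod n) R) (I : Finset (ZMod n)) : R :=
  if h : (I.image (rep n)).card = k ∧ I.card = k then
    Matrix.det (Matrix.of fun i j : Fin k =>
      M i ((((I.image (rep n)).orderIsoOfFin h.1 j : ℕ) : ZMod n)))
  else 0

/-- The generic `k × n` matrix of indeterminates. -/
noncomputable def genericM (k n : ℕ) :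
    Matrix (Fin k) (ZMod n) (MvPolynomial (Fin k × ZMod n) ℂ) :=
  fun c d => MvPolynomial.X (c, d)

/-- The homogeneous coordinate ring `A(k,n)` of the Grassmannian: the `ℂ`-subalgebra of
the polynomial ring generated by the maximal minors `P(I)` of the generic `k × n` matrix,
for `I` ranging over the `k`-subsets of `ZMod n`. -/
noncomputable def grA (k n : ℕ) : Subalgebra ℂ (MvPolynomial (Fin k × ZMod n) ℂ) :=
  Algebra.adjoin ℂ
    {x | ∃ I : Finset (ZMod n), I.card = k ∧ x = pluck (genericM k n) I}

lemma pluck_mem_grA (k n : ℕ) (I : Finset (ZMod n)) :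
    pluck (genericM k n) I ∈ grA k n := by
  by_cases h : (I.image (rep n)).card = k ∧ I.card = k
  · exact Algebra.subset_adjoin ⟨I, h.2, rfl⟩
  · rw [pluck, dif_neg h]
    exact zero_mem _

/-- The Plücker coordinate `P(I)` as an element of `A(k,n)`. -/
noncomputable def grP (k n : ℕ) (I : Finset (ZMod n)) : grA k n :=
  ⟨pluck (genericM k n) I, pluck_mem_grA k n I⟩

/-- The ideal `J` of `A(k,n)` generated by `P(I) - 1` for `I` a consecutive `k`-subset. -/
noncomputable def grJ (k n : ℕ) : Ideal (grA k n) :=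
  Ideal.span {y | ∃ r : ZMod n, y = grP k n (cSeg n r k) - 1}


/-!
Here the matrix has `k + 1` rows (the theorem's `k`). Extend its columns `v_1, …, v_n` to columns
`u_a`, `a ≥ 1`, by the twisted periodicity `u_{a+n} = (-1)^k u_a`. Moving the last of `k + 1`
columns to the front costs the sign `(-1)^k` of a cyclic rotation, which the twist cancels; hence
`P(I) = det(u_{a_0}, …, u_{a_k})` for every increasing lift `a_0 < ⋯ < a_k < a_0 + n` of `I`, and
no other signs ever appear.

The frieze entry `P([s]^k ∪ {b})` is then `det(u_s, …, u_{s+k-1}, u_b)` (also when `b` falls back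
into `[s]^k`: both sides vanish), i.e. the last row of the adjugate of the block `(u_s, …, u_{s+k})`
applied to `u_b`. So every frieze matrix factors as `N · (u_{b+j})_j` through `k + 1` dimensions,
and the `(k + 2) × (k + 2)` ones are singular. For the `(k + 1) × (k + 1)` one, `N · (u_{s-1+j})_j`
is lower triangular with the consecutive minors at `s - 1, …, s + k - 1` on the diagonal; cancelling
the (generically nonzero) minor at `s - 1` leaves a product of consecutive Plücker coordinates,
which are `1` modulo `J`.
-/

open Matrix Finset

section Indexing

variable {n : ℕ}

lemma natCast_rep [NeZero n] (x : ZMod n) : ((rep n x : ℕ) : ZMod n) = x := by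
  unfold rep
  split_ifs with h
  · rw [ZMod.natCast_self, (ZMod.val_eq_zero x).mp h]
  · exact ZMod.natCast_zmod_val x

lemma rep_injective [NeZero n] : Function.Injective (rep n) :=
  Function.LeftInverse.injective natCast_rep

lemma rep_natCast [NeZero n] {a : ℕ} (h1 : 1 ≤ a) (h2 : a ≤ n) : rep n (a : ZMod n) = a := by
  rcases h2.lt_or_eq with h2 | rfl
  · rw [rep, ZMod.val_natCast_of_lt h2, if_neg (by omega)]
  · simp [rep]

lemma val_neg_natCast {a : ℕ} (h0 : 0 < a) (h : a ≤ n) : (-(a : ZMod n)).val = n - a := by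
  have : NeZero n := ⟨by omega⟩
  rcases h.lt_or_eq with h | rfl
  · have hne : (a : ZMod n) ≠ 0 := by
      rw [Ne, ZMod.natCast_eq_zero_iff]
      exact Nat.not_dvd_of_pos_of_lt h0 h
    rw [ZMod.neg_val, if_neg hne, ZMod.val_natCast_of_lt h]
  · simp

lemma exists_natCast_lift (hn : 2 ≤ n) (r : ZMod n) :
    ∃ s, 1 ≤ s ∧ ∀ a : ℕ, r + a = ((s + 1 + a : ℕ) : ZMod n) := by
  have : NeZero n := ⟨by omega⟩
  exact ⟨r.val + n - 1, by omega, fun a => by rw [Nat.sub_add_cancel (by omega)]; simp⟩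

lemma cSeg_natCast (s ℓ : ℕ) :
    cSeg n (s : ZMod n) ℓ = univ.image fun j : Fin ℓ => ((s + j : ℕ) : ZMod n) := by
  ext z
  simp [cSeg, Fin.exists_iff]

lemma natCast_mem_cSeg {s b ℓ : ℕ} (h₁ : s ≤ b) (h₂ : b < s + ℓ) :
    (b : ZMod n) ∈ cSeg n (s : ZMod n) ℓ := by
  rw [cSeg_natCast, mem_image]
  exact ⟨⟨b - s, by omega⟩, mem_univ _, by simp [show s + (b - s) = b by omega]⟩

lemma card_cSeg {ℓ : ℕ} (h : ℓ ≤ n) (s : ZMod n) : (cSeg n s ℓ).card = ℓ := by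
  rw [cSeg, card_image_of_injOn, card_range]
  intro t₁ h₁ t₂ h₂ he
  simp only [coe_range, Set.mem_Iio] at h₁ h₂
  have := congrArg ZMod.val (add_left_cancel he)
  rwa [ZMod.val_natCast_of_lt (by omega), ZMod.val_natCast_of_lt (by omega)] at this

lemma exists_eq_add_of_mem_cIcc {a b x : ZMod n} (h : x ∈ cIcc n a b) :
    ∃ t ≤ (b - a).val, x = a + t := by
  obtain ⟨t, ht, rfl⟩ := mem_image.mp h
  exact ⟨t, Nat.lt_succ_iff.mp (mem_range.mp ht), rfl⟩

lemma image_natCast_cons_init {k : ℕ} {a : Fin (k + 1) → ℕ} {x : ℕ}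
    (hxn : x + n = a (Fin.last k)) :
    (univ.image fun j => ((Fin.cons x (Fin.init a) : Fin (k + 1) → ℕ) j : ZMod n)) =
      univ.image fun j => (a j : ZMod n) := by
  have hcast : (x : ZMod n) = (a (Fin.last k) : ZMod n) := by
    rw [← hxn, Nat.cast_add, ZMod.natCast_self, add_zero]
  ext z
  simp only [mem_image, mem_univ, true_and]
  rw [Fin.exists_fin_succ, Fin.exists_fin_succ']
  simp only [Fin.cons_zero, Fin.cons_succ, Fin.init, hcast]
  tauto

end Indexing

section Pluecker

variable {R : Type*} [CommRing R] {n : ℕ}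

lemma pluck_eq_zero_of_card_ne {K : ℕ} (M : Matrix (Fin K) (ZMod n) R) {I : Finset (ZMod n)}
    (h : I.card ≠ K) : pluck M I = 0 :=
  dif_neg fun h' => h h'.2

lemma pluck_image_eq_det [NeZero n] {K : ℕ} (M : Matrix (Fin K) (ZMod n) R) {a : Fin K → ℕ}
    (ha : StrictMono a) (h1 : ∀ j, 1 ≤ a j) (hn : ∀ j, a j ≤ n) :
    pluck M (univ.image fun j => (a j : ZMod n)) =
      (M.submatrix id fun j => (a j : ZMod n)).det := by
  have hrep : (univ.image fun j => (a j : ZMod n)).image (rep n) = univ.image a := by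
    rw [image_image]
    exact image_congr fun j _ => rep_natCast (h1 j) (hn j)
  have hcard : (univ.image a).card = K := by
    rw [card_image_of_injective _ ha.injective, card_univ, Fintype.card_fin]
  have hsort : (univ.image a).orderEmbOfFin hcard = a :=
    (orderEmbOfFin_unique hcard (fun j => mem_image_of_mem a (mem_univ j)) ha).symm
  have hcard' : (univ.image fun j => (a j : ZMod n)).card = K := by
    rw [← card_image_of_injective _ rep_injective, hrep, hcard]
  rw [pluck, dif_pos ⟨hrep ▸ hcard, hcard'⟩]
  congr 1
  ext c j
  simp only [of_apply, submatrix_apply, id, coe_orderIsoOfFin_apply]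
  simp_rw [hrep, hsort]

end Pluecker

section CyclicLift

variable {R : Type*} [CommRing R] {k n : ℕ}

/-- The column `u_a`: `(a - 1) / n` counts the periods before `a`, so `u_a` is column `a` of `M`
for `1 ≤ a ≤ n`; the index `0` is never used. -/
def liftCol (M : Matrix (Fin (k + 1)) (ZMod n) R) (a : ℕ) : Fin (k + 1) → R :=
  fun c => (-1) ^ (k * ((a - 1) / n)) * M c a

def liftMatrix (M : Matrix (Fin (k + 1)) (ZMod n) R) {ι : Type*} (a : ι → ℕ) :
    Matrix (Fin (k + 1)) ι R :=
  of fun c j => liftCol M (a j) c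

def liftBlock (M : Matrix (Fin (k + 1)) (ZMod n) R) (s : ℕ) :
    Matrix (Fin (k + 1)) (Fin (k + 1)) R :=
  liftMatrix M fun j => s + j

variable (M : Matrix (Fin (k + 1)) (ZMod n) R)

lemma liftCol_add_n [NeZero n] {a : ℕ} (ha : 1 ≤ a) :
    liftCol M (a + n) = (-1 : R) ^ k • liftCol M a := by
  have hdiv : (a + n - 1) / n = (a - 1) / n + 1 := by
    rw [show a + n - 1 = a - 1 + n by omega, Nat.add_div_right _ (NeZero.pos n)]
  ext c
  simp only [liftCol, hdiv, Nat.cast_add, ZMod.natCast_self, add_zero, Pi.smul_apply]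
  ring

lemma det_liftMatrix_cons [NeZero n] {x : ℕ} (hx : 1 ≤ x) (v : Fin k → ℕ) :
    (liftMatrix M (Fin.cons x v : Fin (k + 1) → ℕ)).det =
      (liftMatrix M (Fin.snoc v (x + n) : Fin (k + 1) → ℕ)).det := by
  set w : Fin (k + 1) → R := Fin.snoc (fun _ => 1) ((-1) ^ k)
  set b : Fin (k + 1) → ℕ := Fin.snoc v x with hb
  have hcol : liftMatrix M (Fin.snoc v (x + n) : Fin (k + 1) → ℕ) =
      of fun c j => w j * liftMatrix M b c j := by
    ext c j
    refine Fin.lastCases ?_ (fun i => ?_) j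
    · simp [w, b, liftMatrix, liftCol_add_n M hx]
    · simp [w, b, liftMatrix]
  have hrot : liftMatrix M b = (liftMatrix M (Fin.cons x v)).submatrix id (finRotate (k + 1)) := by
    rw [hb, Fin.snoc_eq_cons_rotate]
    rfl
  rw [hcol, det_mul_row w (liftMatrix M b), hrot, det_permute', sign_finRotate]
  simp [w, Fin.prod_univ_castSucc, ← mul_assoc, ← pow_add, ← two_mul, pow_mul]

lemma pluck_image_eq_det_liftMatrix [NeZero n] {a : Fin (k + 1) → ℕ} (ha : StrictMono a)
    (h1 : ∀ j, 1 ≤ a j) (hw : ∀ i j, a j < a i + n) :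
    pluck M (univ.image fun j => (a j : ZMod n)) = (liftMatrix M a).det := by
  induction hN : ∑ j, (a j - 1) / n using Nat.strong_induction_on generalizing a with
  | _ N ih =>
  by_cases hlast : a (Fin.last k) ≤ n
  · have hle : ∀ j, a j ≤ n := fun j => (ha.monotone (Fin.le_last j)).trans hlast
    rw [pluck_image_eq_det M ha h1 hle]
    congr 1
    ext c j
    have hj : (a j - 1) / n = 0 := Nat.div_eq_of_lt (by have := hle j; have := h1 j; omega)
    simp [liftMatrix, liftCol, hj]
  -- Move the last column, which lies beyond `n`, to the front as column `a last - n`.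
  obtain ⟨x, hxn⟩ : ∃ x, x + n = a (Fin.last k) := ⟨a (Fin.last k) - n, by omega⟩
  have hx0 : x < a 0 := by have := hw 0 (Fin.last k); omega
  have hx1 : 1 ≤ x := by omega
  have ha_snoc : a = Fin.snoc (Fin.init a) (x + n) := by
    rw [hxn]; exact (Fin.snoc_init_self a).symm
  set a' : Fin (k + 1) → ℕ := Fin.cons x (Fin.init a)
  have hlt : ∀ j, a' j < x + n := Fin.cases (by simpa [a'] using NeZero.pos n) fun i => by
    simpa [a', Fin.init, hxn] using ha (Fin.castSucc_lt_last i)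
  have hx_le : ∀ j, x ≤ a' j := Fin.cases (by simp [a']) fun i => by
    simpa [a', Fin.init] using hx0.le.trans (ha.monotone (Fin.zero_le i.castSucc))
  have ha' : StrictMono a' :=
    Fin.strictMono_cons.mpr ⟨fun j => hx0.trans_le (ha.monotone (Fin.zero_le _)),
      ha.comp Fin.strictMono_castSucc⟩
  have hN' : ∑ j, (a' j - 1) / n < N := by
    have hdiv : (a (Fin.last k) - 1) / n = (x - 1) / n + 1 := by
      rw [show a (Fin.last k) - 1 = x - 1 + n by omega, Nat.add_div_right _ (NeZero.pos n)]
    rw [← hN, Fin.sum_univ_succ, Fin.sum_univ_castSucc, hdiv]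
    simp only [a', Fin.cons_zero, Fin.cons_succ, Fin.init]
    omega
  rw [← image_natCast_cons_init hxn, ih _ hN' ha' (fun j => hx1.trans (hx_le j))
    (fun i j => (hlt j).trans_le (by have := hx_le i; omega)) rfl]
  conv_rhs => rw [ha_snoc]
  exact det_liftMatrix_cons M hx1 _

lemma pluck_cSeg_eq_det_liftBlock [NeZero n] {s : ℕ} (hs : 1 ≤ s) (hk : k < n) :
    pluck M (cSeg n s (k + 1)) = (liftBlock M s).det := by
  rw [cSeg_natCast]
  exact pluck_image_eq_det_liftMatrix M (fun i j h => by simpa using h)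
    (fun j => le_add_right hs) (fun i j => by omega)

lemma det_liftBlock_updateCol_eq_zero {s b : ℕ} (hsb : s ≤ b) (hb : b < s + k) :
    ((liftBlock M s).updateCol (Fin.last k) (liftCol M b)).det = 0 := by
  have hcol : liftCol M b = fun c => liftBlock M s c ⟨b - s, by omega⟩ := by
    ext c; simp [liftBlock, liftMatrix, show s + (b - s) = b by omega]
  rw [hcol]
  exact det_updateCol_eq_zero (Fin.ne_of_lt (by simp [Fin.lt_def]; omega))

lemma pluck_cSeg_union_eq_det_updateCol [NeZero n] {s b : ℕ} (hs : 1 ≤ s) (hsb : s ≤ b)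
    (hb : b < s + n + k) (hk : k < n) :
    pluck M (cSeg n s k ∪ {(b : ZMod n)}) =
      ((liftBlock M s).updateCol (Fin.last k) (liftCol M b)).det := by
  have hcoll : (b : ZMod n) ∈ cSeg n s k → pluck M (cSeg n s k ∪ {(b : ZMod n)}) = 0 := by
    intro hmem
    rw [union_eq_left.mpr (singleton_subset_iff.mpr hmem)]
    exact pluck_eq_zero_of_card_ne M (by rw [card_cSeg hk.le]; omega)
  rcases lt_or_ge b (s + k) with h | h
  · rw [det_liftBlock_updateCol_eq_zero M hsb h, hcoll (natCast_mem_cSeg hsb h)]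
  rcases lt_or_ge b (s + n) with h' | h'
  · set a : Fin (k + 1) → ℕ := fun j => if (j : ℕ) < k then s + j else b
    have hbound : ∀ j, s ≤ a j ∧ a j ≤ b := fun j => by dsimp only [a]; split_ifs <;> omega
    have ha : StrictMono a := fun i j hij => by
      have : (i : ℕ) < j := hij
      have := j.isLt
      dsimp only [a]; split_ifs <;> omega
    have himage : cSeg n s k ∪ {(b : ZMod n)} = univ.image fun j => (a j : ZMod n) := by
      ext z
      simp only [cSeg_natCast, mem_union, mem_image, mem_univ, true_and, mem_singleton,
        Fin.exists_fin_succ', a, Fin.val_castSucc, Fin.is_lt, if_true, Fin.val_last,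
        lt_irrefl, if_false]
      tauto
    rw [himage, pluck_image_eq_det_liftMatrix M ha (fun j => hs.trans (hbound j).1)
      (fun i j => by have := hbound i; have := hbound j; omega)]
    congr 1
    ext c j
    refine Fin.lastCases ?_ (fun i => ?_) j <;> simp [a, liftBlock, liftMatrix]
  · obtain ⟨b', rfl⟩ : ∃ b', b = b' + n := ⟨b - n, by omega⟩
    rw [liftCol_add_n M (hs.trans (show s ≤ b' by omega)), det_updateCol_smul,
      det_liftBlock_updateCol_eq_zero M (by omega) (by omega), mul_zero,
      hcoll (by simpa using natCast_mem_cSeg (n := n) (show s ≤ b' by omega) (by omega))]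

end CyclicLift

section Cofactors

variable {R : Type*} [CommRing R]

lemma det_updateCol_eq_sum_adjugate {ι : Type*} [Fintype ι] [DecidableEq ι] (A : Matrix ι ι R)
    (j : ι) (v : ι → R) : (A.updateCol j v).det = ∑ l, A.adjugate j l * v l := by
  rw [← cramer_apply, cramer_eq_adjugate_mulVec]
  rfl

lemma det_mul_eq_zero_of_fin_succ {m : ℕ} (A : Matrix (Fin (m + 1)) (Fin m) R)
    (B : Matrix (Fin m) (Fin (m + 1)) R) : (A * B).det = 0 := by
  set A' : Matrix (Fin (m + 1)) (Fin (m + 1)) R := of fun i l => Fin.lastCases 0 (A i) l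
  set B' : Matrix (Fin (m + 1)) (Fin (m + 1)) R := of fun l j => Fin.lastCases 0 (B · j) l
  have hAB : A * B = A' * B' := by
    ext i j
    simp [mul_apply, Fin.sum_univ_castSucc, A', B']
  rw [hAB, det_mul, det_eq_zero_of_column_eq_zero (Fin.last m) (fun i => by simp [A']), zero_mul]

variable {k n : ℕ} (M : Matrix (Fin (k + 1)) (ZMod n) R)

def lastCofactors (s m : ℕ) : Matrix (Fin m) (Fin (k + 1)) R :=
  of fun i l => adjugate (liftBlock M (s + i)) (Fin.last k) l

lemma lastCofactors_mul_liftMatrix (s m : ℕ) {ι : Type*} (b : ι → ℕ) (i : Fin m) (j : ι) :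
    (lastCofactors M s m * liftMatrix M b) i j =
      ((liftBlock M (s + i)).updateCol (Fin.last k) (liftCol M (b j))).det := by
  rw [det_updateCol_eq_sum_adjugate, mul_apply]
  rfl

lemma pluck_frieze_eq_lastCofactors_mul [NeZero n] {s b m : ℕ} (hs : 1 ≤ s)
    (hlo : s + m ≤ b + 1) (hhi : b + m ≤ s + n + k) (hk : k < n) :
    (of fun i j : Fin m => pluck M (cSeg n ((s + i : ℕ) : ZMod n) k ∪ {((b + j : ℕ) : ZMod n)})) =
      lastCofactors M s m * liftMatrix M fun j : Fin m => b + j := by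
  ext i j
  have := i.isLt
  have := j.isLt
  rw [lastCofactors_mul_liftMatrix, of_apply]
  exact pluck_cSeg_union_eq_det_updateCol M (by omega) (by omega) (by omega) hk

theorem det_pluck_frieze_eq_zero [NeZero n] {s t : ℕ} (hs : 1 ≤ s) (ht₁ : 1 ≤ t)
    (ht : t + k + 1 < n) :
    (of fun i j : Fin (k + 2) => pluck M
      (cSeg n ((s + i : ℕ) : ZMod n) k ∪ {((s + k + t + j : ℕ) : ZMod n)})).det = 0 := by
  rw [pluck_frieze_eq_lastCofactors_mul M hs (by omega) (by omega) (by omega)]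
  exact det_mul_eq_zero_of_fin_succ _ _

lemma det_lastCofactors_mul_liftBlock (s : ℕ) :
    (lastCofactors M (s + 1) (k + 1) * liftBlock M s).det =
      ∏ i : Fin (k + 1), (liftBlock M (s + i)).det := by
  -- Entry `(i, j)` is `det(u_{s+1+i}, …, u_{s+i+k}, u_{s+j})`: it has a repeated column when
  -- `j > i` and is a rotation of the block at `s + i` when `j = i`.
  have hdiag : ∀ i : Fin (k + 1), (lastCofactors M (s + 1) (k + 1) * liftBlock M s) i i =
      (-1) ^ k * (liftBlock M (s + i)).det := by
    intro i
    have hrot : (liftBlock M (s + 1 + i)).updateCol (Fin.last k) (liftCol M (s + i)) =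
        (liftBlock M (s + i)).submatrix id (finRotate (k + 1)) := by
      ext c j
      refine Fin.lastCases ?_ (fun j => ?_) j
      · simp [liftBlock, liftMatrix]
      · simp [liftBlock, liftMatrix, Fin.castSucc_ne_last]
        ring_nf
    rw [liftBlock, lastCofactors_mul_liftMatrix, hrot, det_permute', sign_finRotate]
    simp
  rw [det_of_isLowerTriangular _ fun i j (hij : i < j) => ?_]
  · simp_rw [hdiag, prod_mul_distrib, prod_const, card_univ, Fintype.card_fin, ← pow_mul,
      (Nat.even_mul_succ_self k).neg_one_pow, one_mul]
  · rw [liftBlock, lastCofactors_mul_liftMatrix]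
    have : (i : ℕ) < j := hij
    have := j.isLt
    exact det_liftBlock_updateCol_eq_zero M (by omega) (by omega)

lemma det_lastCofactors [IsDomain R] {s : ℕ} (h : (liftBlock M s).det ≠ 0) :
    (lastCofactors M (s + 1) (k + 1)).det = ∏ i : Fin k, (liftBlock M (s + 1 + i)).det := by
  refine mul_right_cancel₀ h ?_
  rw [← det_mul, det_lastCofactors_mul_liftBlock, Fin.prod_univ_succ, mul_comm]
  simp [add_assoc, add_comm 1]

end Cofactors

section Generic

variable {k n : ℕ}

lemma det_submatrix_genericM_ne_zero {K : ℕ} {f : Fin K → ZMod n} (hf : Function.Injective f) :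
    ((genericM K n).submatrix id f).det ≠ 0 := by
  set φ := MvPolynomial.eval fun p : Fin K × ZMod n => if p.2 = f p.1 then (1 : ℂ) else 0
  have hone : φ.mapMatrix ((genericM K n).submatrix id f) = 1 := by
    ext a b
    simp [φ, genericM, one_apply, hf.eq_iff, eq_comm]
  intro h
  have := congrArg φ h
  rw [RingHom.map_det, hone, det_one, map_zero] at this
  exact one_ne_zero this

lemma det_liftBlock_genericM_ne_zero [NeZero n] (hk : k < n) (s : ℕ) :
    (liftBlock (genericM (k + 1) n) s).det ≠ 0 := by
  have hinj : Function.Injective fun j : Fin (k + 1) => ((s + j : ℕ) : ZMod n) := by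
    intro i j hij
    have : ((i : ℕ) : ZMod n) = j := by simpa using hij
    replace := congrArg ZMod.val this
    rwa [ZMod.val_natCast_of_lt (by omega), ZMod.val_natCast_of_lt (by omega), ← Fin.ext_iff]
      at this
  have hsign : liftBlock (genericM (k + 1) n) s = of fun c (j : Fin (k + 1)) =>
      (-1) ^ (k * ((s + j - 1) / n)) *
        (genericM (k + 1) n).submatrix id (fun j : Fin (k + 1) => ((s + j : ℕ) : ZMod n)) c j :=
    rfl
  rw [hsign, det_mul_row]
  exact mul_ne_zero (prod_ne_zero_iff.mpr fun j _ => pow_ne_zero _ (neg_ne_zero.mpr one_ne_zero))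
    (det_submatrix_genericM_ne_zero hinj)

theorem det_pluck_frieze_eq_prod [NeZero n] {s t : ℕ} (hs : 1 ≤ s) (ht : t + k < n) :
    (of fun i j : Fin (k + 1) => pluck (genericM (k + 1) n)
      (cSeg n ((s + 1 + i : ℕ) : ZMod n) k ∪ {((s + 1 + k + t + j : ℕ) : ZMod n)})).det =
      (∏ i : Fin k, pluck (genericM (k + 1) n) (cSeg n ((s + 1 + i : ℕ) : ZMod n) (k + 1))) *
        pluck (genericM (k + 1) n) (cSeg n ((s + 1 + k + t : ℕ) : ZMod n) (k + 1)) := by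
  rw [pluck_frieze_eq_lastCofactors_mul _ (by omega) (by omega) (by omega) (by omega), det_mul,
    det_lastCofactors _ (det_liftBlock_genericM_ne_zero (by omega) s),
    pluck_cSeg_eq_det_liftBlock _ (by omega) (by omega)]
  congr 1
  exact prod_congr rfl fun i _ => (pluck_cSeg_eq_det_liftBlock _ (by omega) (by omega)).symm

end Generic

section Quotient

variable {k n : ℕ}

lemma det_of_map {ι R S : Type*} [Fintype ι] [DecidableEq ι] [CommRing R] [CommRing S]
    (f : R →+* S) (A : ι → ι → R) : (of fun i j => f (A i j)).det = f (of A).det :=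
  (RingHom.map_det f (of A)).symm

lemma coe_det_grP {m : ℕ} (I : Fin m → Fin m → Finset (ZMod n)) :
    (((of fun i j => grP k n (I i j)).det : grA k n) : MvPolynomial (Fin k × ZMod n) ℂ) =
      (of fun i j => pluck (genericM k n) (I i j)).det :=
  RingHom.map_det (grA k n).val.toRingHom _

lemma mk_grP_cSeg (r : ZMod n) : Ideal.Quotient.mk (grJ k n) (grP k n (cSeg n r k)) = 1 := by
  rw [← map_one (Ideal.Quotient.mk (grJ k n)), Ideal.Quotient.eq]
  exact Ideal.subset_span ⟨r, rfl⟩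

theorem det_mk_frieze_eq_one (hkn : k + 1 < n) (r : ZMod n) {m : ZMod n}
    (hm : m ∈ cIcc n (r + ((k + 1 : ℕ) : ZMod n) - 1) (r - 1)) :
    (of fun i j : Fin (k + 1) => Ideal.Quotient.mk (grJ (k + 1) n)
      (grP (k + 1) n (cSeg n (r + ((i : ℕ) : ZMod n)) k ∪ {m + ((j : ℕ) : ZMod n)}))).det = 1 := by
  have : NeZero n := ⟨by omega⟩
  obtain ⟨t, ht, hmt⟩ := exists_eq_add_of_mem_cIcc hm
  rw [show r - 1 - (r + ((k + 1 : ℕ) : ZMod n) - 1) = -((k + 1 : ℕ) : ZMod n) by ring,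
    val_neg_natCast (by omega) (by omega)] at ht
  obtain ⟨s, hs, hrow⟩ := exists_natCast_lift (by omega) r
  have hcol : ∀ a : ℕ, m + a = ((s + 1 + k + t + a : ℕ) : ZMod n) := fun a => by
    rw [hmt, show s + 1 + k + t + a = s + 1 + (k + t + a) by ring, ← hrow]
    push_cast; ring
  have hdet : (of fun i j : Fin (k + 1) => grP (k + 1) n
      (cSeg n ((s + 1 + i : ℕ) : ZMod n) k ∪ {((s + 1 + k + t + j : ℕ) : ZMod n)})).det =
      (∏ i : Fin k, grP (k + 1) n (cSeg n ((s + 1 + i : ℕ) : ZMod n) (k + 1))) *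
        grP (k + 1) n (cSeg n ((s + 1 + k + t : ℕ) : ZMod n) (k + 1)) := by
    apply Subtype.ext
    rw [coe_det_grP, det_pluck_frieze_eq_prod hs (by omega)]
    simp [grP]
  simp only [hcol, hrow]
  rw [det_of_map, hdet]
  simp [mk_grP_cSeg]

theorem det_mk_frieze_eq_zero (hkn : k + 3 ≤ n) (r : ZMod n) {m : ZMod n}
    (hm : m ∈ cIcc n (r + ((k + 1 : ℕ) : ZMod n)) (r - 2)) :
    (of fun i j : Fin (k + 2) => Ideal.Quotient.mk (grJ (k + 1) n)
      (grP (k + 1) n (cSeg n (r + ((i : ℕ) : ZMod n)) k ∪ {m + ((j : ℕ) : ZMod n)}))).det = 0 := by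
  have : NeZero n := ⟨by omega⟩
  obtain ⟨t, ht, hmt⟩ := exists_eq_add_of_mem_cIcc hm
  rw [show r - 2 - (r + ((k + 1 : ℕ) : ZMod n)) = -((k + 3 : ℕ) : ZMod n) by push_cast; ring,
    val_neg_natCast (by omega) hkn] at ht
  obtain ⟨s, hs, hrow⟩ := exists_natCast_lift (by omega) r
  have hcol : ∀ a : ℕ, m + a = ((s + 1 + k + (t + 1) + a : ℕ) : ZMod n) := fun a => by
    rw [hmt, show s + 1 + k + (t + 1) + a = s + 1 + (k + 1 + t + a) by ring, ← hrow]
    push_cast; ring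
  simp only [hcol, hrow]
  rw [det_of_map]
  convert map_zero (Ideal.Quotient.mk (grJ (k + 1) n))
  apply Subtype.ext
  rw [coe_det_grP, det_pluck_frieze_eq_zero _ (by omega) (by omega) (by omega)]
  rfl

end Quotient

theorem statement0 (k n : ℕ) (hk : 2 ≤ k) (hkn : 2 * k ≤ n) :
    (∀ r : ZMod n, ∀ m ∈ cIcc n (r + (k : ZMod n) - 1) (r - 1),
      Matrix.det (Matrix.of fun i j : Fin k =>
        Ideal.Quotient.mk (grJ k n)
          (grP k n (cSeg n (r + ((i : ℕ) : ZMod n)) (k - 1) ∪ {m + ((j : ℕ) : ZMod n)}))) = 1) ∧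
    (∀ r : ZMod n, ∀ m ∈ cIcc n (r + (k : ZMod n)) (r - 2),
      Matrix.det (Matrix.of fun i j : Fin (k + 1) =>
        Ideal.Quotient.mk (grJ k n)
          (grP k n (cSeg n (r + ((i : ℕ) : ZMod n)) (k - 1) ∪ {m + ((j : ℕ) : ZMod n)}))) = 0) := by
  obtain ⟨k, rfl⟩ : ∃ k', k = k' + 1 := ⟨k - 1, by omega⟩
  simp only [Nat.add_sub_cancel]
  exact ⟨fun r m hm => det_mk_frieze_eq_one (by omega) r hm,
    fun r m hm => det_mk_frieze_eq_zero (by omega) r hm⟩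
end

section
/- Let n ≥ 5 be an integer. The 2(n−4) three-element subsets of ℤ/nℤ given by {1, 2, m} for 4 ≤ m ≤ n−1 and by {1, s, s+1} for 3 ≤ s ≤ n−2 are pairwise distinct, pairwise non-crossing, and each is almost consecutive but not consecutive. -/
/-- The cyclic open interval `(a,b) = [a,b] ∖ {a,b}` in `ZMod n`. -/
def cOo (n : ℕ) (a b : ZMod n) : Finset (ZMod n) := ((cIcc n a b).erase a).erase b

/-- Two subsets `I, J` of `ZMod n` are crossing if there are `a, c ∈ I ∖ J` and
`b, d ∈ J ∖ I` with `b ∈ (a,c)` and `d ∈ (c,a)`. -/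
def Crossing (n : ℕ) (I J : Finset (ZMod n)) : Prop :=
  ∃ a ∈ I \ J, ∃ c ∈ I \ J, ∃ b ∈ J \ I, ∃ d ∈ J \ I, b ∈ cOo n a c ∧ d ∈ cOo n c a

/-- A subset of `ZMod n` is a consecutive `k`-subset if it is `[r]^k` for some `r`. -/
def Consec (n k : ℕ) (I : Finset (ZMod n)) : Prop := ∃ r : ZMod n, I = cSeg n r k

/-- A subset of `ZMod n` is an almost consecutive `k`-subset if it is
`[r]^(k-1) ∪ {m}` for some `r` and some `m ∉ [r]^(k-1)`. -/
def AlmostConsec (n k : ℕ) (I : Finset (ZMod n)) : Prop :=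
  ∃ r m : ZMod n, m ∉ cSeg n r (k - 1) ∧ I = cSeg n r (k - 1) ∪ {m}

section helpersX
variable {n : ℕ}

lemma val_sub_cases [NeZero n] (x y : ZMod n) :
    (x - y).val + y.val = x.val ∨ (x - y).val + y.val = x.val + n := by
  have h := ZMod.val_add (x - y) y
  rw [sub_add_cancel] at h
  have h1 := ZMod.val_lt (x - y)
  have h2 := ZMod.val_lt y
  rcases lt_or_ge ((x - y).val + y.val) n with h3 | h3
  · left; rw [h, Nat.mod_eq_of_lt h3]
  · right
    rw [h]
    have : (x - y).val + y.val - n < n := by omega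
    rw [Nat.mod_eq_sub_mod h3, Nat.mod_eq_of_lt this]
    omega

lemma mem_cSeg [NeZero n] {r x : ZMod n} {ℓ : ℕ} (h : ℓ ≤ n) :
    x ∈ cSeg n r ℓ ↔ (x - r).val < ℓ := by
  simp only [cSeg, Finset.mem_image, Finset.mem_range]
  constructor
  · rintro ⟨t, ht, rfl⟩
    rw [add_sub_cancel_left, ZMod.val_cast_of_lt (by omega)]
    exact ht
  · intro hx
    exact ⟨(x - r).val, hx, by rw [ZMod.natCast_val, ZMod.cast_id]; ring⟩

lemma mem_cOo [NeZero n] {a c x : ZMod n} :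
    x ∈ cOo n a c ↔ 0 < (x - a).val ∧ (x - a).val < (c - a).val := by
  have hc := ZMod.val_lt (c - a)
  rw [cOo, Finset.mem_erase, Finset.mem_erase, cIcc, mem_cSeg (by omega)]
  constructor
  · rintro ⟨hxc, hxa, hle⟩
    have h2 : (x - a).val ≠ (c - a).val := fun h => hxc (sub_left_inj.mp (ZMod.val_injective n h))
    have h3 : (x - a).val ≠ 0 := fun h => (sub_ne_zero.mpr hxa) ((ZMod.val_eq_zero _).mp h)
    omega
  · rintro ⟨h1, h2⟩
    refine ⟨fun h => ?_, fun h => ?_, by omega⟩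
    · subst h; omega
    · subst h; simp at h1

lemma not_mem_both [NeZero n] {a c x : ZMod n} (h1 : x ∈ cOo n a c) (h2 : x ∈ cOo n c a) : False := by
  rw [mem_cOo] at h1 h2
  have e1 := val_sub_cases x a; have e2 := val_sub_cases c a
  have e3 := val_sub_cases x c; have e4 := val_sub_cases a c
  have := ZMod.val_lt (x - a); have := ZMod.val_lt (c - a)
  have := ZMod.val_lt (x - c); have := ZMod.val_lt (a - c)
  have := ZMod.val_lt x; have := ZMod.val_lt a; have := ZMod.val_lt c
  omega

lemma rotate [NeZero n] {a b c d : ZMod n} (h1 : b ∈ cOo n a c) (h2 : d ∈ cOo n c a) :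
    c ∈ cOo n b d ∧ a ∈ cOo n d b := by
  obtain ⟨p1, p2⟩ := mem_cOo.mp h1
  obtain ⟨p3, p4⟩ := mem_cOo.mp h2
  have e1 := val_sub_cases b a; have e2 := val_sub_cases c a
  have e3 := val_sub_cases d c; have e4 := val_sub_cases a c
  have e5 := val_sub_cases c b; have e6 := val_sub_cases d b
  have e7 := val_sub_cases a d; have e8 := val_sub_cases b d
  have w1 := ZMod.val_lt (b - a); have w2 := ZMod.val_lt (c - a)
  have w3 := ZMod.val_lt (d - c); have w4 := ZMod.val_lt (a - c)
  have w5 := ZMod.val_lt (c - b); have w6 := ZMod.val_lt (d - b)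
  have w7 := ZMod.val_lt (a - d); have w8 := ZMod.val_lt (b - d)
  have u1 := ZMod.val_lt a; have u2 := ZMod.val_lt b
  have u3 := ZMod.val_lt c; have u4 := ZMod.val_lt d
  refine ⟨mem_cOo.mpr ⟨?_, ?_⟩, mem_cOo.mpr ⟨?_, ?_⟩⟩ <;> omega

lemma cOo_consec_empty [NeZero n] (h : 1 < n) {t x : ZMod n} : x ∉ cOo n t (t + 1) := by
  haveI : Fact (1 < n) := ⟨h⟩
  rw [mem_cOo, show t + 1 - t = 1 by ring, ZMod.val_one]
  omega

lemma crossing_symm [NeZero n] {I J : Finset (ZMod n)} (h : Crossing n I J) : Crossing n J I := by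
  obtain ⟨a, ha, c, hc, b, hb, d, hd, hx1, hx2⟩ := h
  obtain ⟨h3, h4⟩ := rotate hx1 hx2
  exact ⟨b, hb, d, hd, c, hc, a, ha, h3, h4⟩

lemma not_crossing_of_subset [NeZero n] (h1 : 1 < n) {I J : Finset (ZMod n)} {t : ZMod n}
    (h : J \ I ⊆ {t, t + 1}) : ¬ Crossing n I J := by
  rintro ⟨a, ha, c, hc, b, hb, d, hd, hbc, hdc⟩
  have hb' := h hb; have hd' := h hd
  simp only [Finset.mem_insert, Finset.mem_singleton] at hb' hd'
  have hbd : b ≠ d := fun h => not_mem_both hbc (h ▸ hdc)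
  obtain ⟨h3, h4⟩ := rotate hbc hdc
  rcases hb' with rfl | rfl <;> rcases hd' with rfl | rfl
  · exact hbd rfl
  · exact cOo_consec_empty h1 h3
  · exact cOo_consec_empty h1 h4
  · exact hbd rfl

lemma cSeg_two (r : ZMod n) : cSeg n r 2 = {r, r + 1} := by
  ext x
  simp only [cSeg, Finset.mem_image, Finset.mem_range, Finset.mem_insert, Finset.mem_singleton]
  constructor
  · rintro ⟨t, ht, rfl⟩
    interval_cases t <;> simp
  · rintro (rfl | rfl)
    · exact ⟨0, by norm_num⟩
    · exact ⟨1, by norm_num⟩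

lemma cSeg_three (r : ZMod n) : cSeg n r 3 = {r, r + 1, r + 2} := by
  ext x
  simp only [cSeg, Finset.mem_image, Finset.mem_range, Finset.mem_insert, Finset.mem_singleton]
  constructor
  · rintro ⟨t, ht, rfl⟩
    interval_cases t <;> norm_num
  · rintro (rfl | rfl | rfl)
    · exact ⟨0, by norm_num⟩
    · exact ⟨1, by norm_num⟩
    · exact ⟨2, by norm_num⟩

end helpersX

theorem statement6 (n : ℕ) (hn : 5 ≤ n)
    (S : Finset (Finset (ZMod n)))
    (hS : S =
      ((Finset.Icc 4 (n - 1)).image fun m : ℕ => ({1, 2, (m : ZMod n)} : Finset (ZMod n))) ∪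
      ((Finset.Icc 3 (n - 2)).image fun s : ℕ =>
        ({1, (s : ZMod n), (s : ZMod n) + 1} : Finset (ZMod n)))) :
    S.card = 2 * (n - 4) ∧
    (∀ I ∈ S, I.card = 3 ∧ AlmostConsec n 3 I ∧ ¬ Consec n 3 I) ∧
    (∀ I ∈ S, ∀ J ∈ S, ¬ Crossing n I J) := by
  haveI : NeZero n := ⟨by omega⟩
  haveI : Fact (1 < n) := ⟨by omega⟩
  have h1n : 1 < n := by omega
  -- value computations
  have vnat : ∀ u : ℕ, u < n → ((u : ZMod n)).val = u := fun u hu => ZMod.val_cast_of_lt hu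
  have v0 : (0 : ZMod n).val = 0 := ZMod.val_zero
  have v1 : (1 : ZMod n).val = 1 := ZMod.val_one n
  have v2 : (2 : ZMod n).val = 2 := by
    rw [show (2 : ZMod n) = ((2 : ℕ) : ZMod n) by norm_cast]; exact vnat 2 (by omega)
  have v3 : (3 : ZMod n).val = 3 := by
    rw [show (3 : ZMod n) = ((3 : ℕ) : ZMod n) by norm_cast]; exact vnat 3 (by omega)
  have vsucc : ∀ s : ℕ, s + 1 < n → ((s : ZMod n) + 1).val = s + 1 := by
    intro s h
    rw [show (s : ZMod n) + 1 = ((s + 1 : ℕ) : ZMod n) by push_cast; ring]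
    exact vnat (s + 1) h
  have nev : ∀ x y : ZMod n, x.val ≠ y.val → x ≠ y := fun x y h h' => h (h' ▸ rfl)
  refine ⟨?_, ?_, ?_⟩
  · -- cardinality
    subst hS
    have hdisj : Disjoint
        ((Finset.Icc 4 (n - 1)).image fun m : ℕ => ({1, 2, (m : ZMod n)} : Finset (ZMod n)))
        ((Finset.Icc 3 (n - 2)).image fun s : ℕ =>
          ({1, (s : ZMod n), (s : ZMod n) + 1} : Finset (ZMod n))) := by
      rw [Finset.disjoint_left]
      rintro X hX hX'
      simp only [Finset.mem_image, Finset.mem_Icc] at hX hX'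
      obtain ⟨m, ⟨hm4, hmn⟩, rfl⟩ := hX
      obtain ⟨s, ⟨hs3, hsn⟩, heq⟩ := hX'
      have h2 : (2 : ZMod n) ∈ ({1, (s : ZMod n), (s : ZMod n) + 1} : Finset (ZMod n)) := by
        rw [heq]; simp
      simp only [Finset.mem_insert, Finset.mem_singleton] at h2
      rcases h2 with h | h | h
      · exact nev 2 1 (by rw [v1, v2]; omega) h
      · exact nev 2 (s : ZMod n) (by rw [v2, vnat s (by omega)]; omega) h
      · exact nev 2 ((s : ZMod n) + 1) (by rw [v2, vsucc s (by omega)]; omega) h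
    rw [Finset.card_union_of_disjoint hdisj,
      Finset.card_image_of_injOn, Finset.card_image_of_injOn, Nat.card_Icc, Nat.card_Icc]
    · omega
    · -- injOn B
      intro s hs s' hs' h
      simp only [Finset.coe_Icc, Set.mem_Icc] at hs hs'
      replace h : ({1, (s : ZMod n), (s : ZMod n) + 1} : Finset (ZMod n)) =
          {1, (s' : ZMod n), (s' : ZMod n) + 1} := h
      have hmem : (s : ZMod n) ∈ ({1, (s' : ZMod n), (s' : ZMod n) + 1} : Finset (ZMod n)) := by
        rw [← h]; simp
      simp only [Finset.mem_insert, Finset.mem_singleton] at hmem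
      rcases hmem with h' | h' | h'
      · exact absurd h' (nev _ _ (by rw [v1, vnat s (by omega)]; omega))
      · have := congrArg ZMod.val h'
        rw [vnat s (by omega), vnat s' (by omega)] at this
        exact this
      · -- s = s' + 1 : then also s' ∈ {1, s, s+1}, forcing s' = s - 1, contradiction with sets equal
        have := congrArg ZMod.val h'
        rw [vnat s (by omega), vsucc s' (by omega)] at this
        -- s = s' + 1; now use s'+1+1 = s+1 ∈ LHS
        have hmem2 : ((s' : ZMod n) + 1) ∈ ({1, (s : ZMod n), (s : ZMod n) + 1} : Finset (ZMod n)) := by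
          rw [h]; simp
        simp only [Finset.mem_insert, Finset.mem_singleton] at hmem2
        have hmem3 : ((s' : ZMod n)) ∈ ({1, (s : ZMod n), (s : ZMod n) + 1} : Finset (ZMod n)) := by
          rw [h]; simp
        simp only [Finset.mem_insert, Finset.mem_singleton] at hmem3
        rcases hmem3 with h'' | h'' | h''
        · exact absurd (congrArg ZMod.val h'')
            (by rw [v1, vnat s' (by omega)]; omega)
        · have h3 := congrArg ZMod.val h''
          rw [vnat s' (by omega), vnat s (by omega)] at h3
          omega
        · have h3 := congrArg ZMod.val h''
          rw [vnat s' (by omega), vsucc s (by omega)] at h3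
          omega
    · -- injOn A
      intro m hm m' hm' h
      simp only [Finset.coe_Icc, Set.mem_Icc] at hm hm'
      replace h : ({1, 2, (m : ZMod n)} : Finset (ZMod n)) = {1, 2, (m' : ZMod n)} := h
      have hmem : (m : ZMod n) ∈ ({1, 2, (m' : ZMod n)} : Finset (ZMod n)) := by
        rw [← h]; simp
      simp only [Finset.mem_insert, Finset.mem_singleton] at hmem
      rcases hmem with h' | h' | h'
      · exact absurd (congrArg ZMod.val h') (by rw [v1, vnat m (by omega)]; omega)
      · exact absurd (congrArg ZMod.val h') (by rw [v2, vnat m (by omega)]; omega)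
      · have := congrArg ZMod.val h'
        rw [vnat m (by omega), vnat m' (by omega)] at this
        exact this
  · -- each element: card 3, almost consec, not consec
    intro I hI
    rw [hS, Finset.mem_union] at hI
    simp only [Finset.mem_image, Finset.mem_Icc] at hI
    rcases hI with ⟨m, ⟨hm4, hmn⟩, rfl⟩ | ⟨s, ⟨hs3, hsn⟩, rfl⟩
    · -- type A
      have ne12 : (1 : ZMod n) ≠ 2 := nev _ _ (by rw [v1, v2]; omega)
      have ne1m : (1 : ZMod n) ≠ (m : ZMod n) := nev _ _ (by rw [v1, vnat m (by omega)]; omega)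
      have ne2m : (2 : ZMod n) ≠ (m : ZMod n) := nev _ _ (by rw [v2, vnat m (by omega)]; omega)
      refine ⟨?_, ?_, ?_⟩
      · exact Finset.card_eq_three.mpr ⟨1, 2, (m : ZMod n), ne12, ne1m, ne2m, rfl⟩
      · refine ⟨1, (m : ZMod n), ?_, ?_⟩
        · rw [show (3 - 1 : ℕ) = 2 from rfl, cSeg_two]
          simp only [Finset.mem_insert, Finset.mem_singleton]
          push_neg
          constructor
          · exact ne1m.symm
          · rw [show (1 : ZMod n) + 1 = 2 by norm_num]
            exact ne2m.symm
        · rw [show (3 - 1 : ℕ) = 2 from rfl, cSeg_two,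
            show (1 : ZMod n) + 1 = 2 by norm_num]
          ext x
          simp only [Finset.mem_union, Finset.mem_insert, Finset.mem_singleton]
          tauto
      · rintro ⟨r, hr⟩
        rw [cSeg_three] at hr
        have h1 : (1 : ZMod n) ∈ ({r, r + 1, r + 2} : Finset (ZMod n)) := by rw [← hr]; simp
        simp only [Finset.mem_insert, Finset.mem_singleton] at h1
        have hzero : (0 : ZMod n) ∉ ({1, 2, (m : ZMod n)} : Finset (ZMod n)) := by
          simp only [Finset.mem_insert, Finset.mem_singleton]
          push_neg
          refine ⟨nev _ _ (by rw [v0, v1]; omega), nev _ _ (by rw [v0, v2]; omega),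
            nev _ _ (by rw [v0, vnat m (by omega)]; omega)⟩
        rcases h1 with h | h | h
        · -- r = 1
          rw [← h] at hr
          have hm' : (m : ZMod n) ∈ ({(1 : ZMod n), 1 + 1, 1 + 2} : Finset (ZMod n)) := by
            rw [← hr]; simp
          rw [show (1 : ZMod n) + 1 = 2 by norm_num, show (1 : ZMod n) + 2 = 3 by norm_num] at hm'
          simp only [Finset.mem_insert, Finset.mem_singleton] at hm'
          rcases hm' with h' | h' | h'
          · exact absurd (congrArg ZMod.val h') (by rw [v1, vnat m (by omega)]; omega)
          · exact absurd (congrArg ZMod.val h') (by rw [v2, vnat m (by omega)]; omega)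
          · exact absurd (congrArg ZMod.val h') (by rw [v3, vnat m (by omega)]; omega)
        · -- r = 0
          have hr0 : r = 0 := by linear_combination -h
          apply hzero
          rw [hr, hr0]
          simp
        ·
          have hr0 : r + 1 = 0 := by linear_combination -h
          apply hzero
          rw [hr]
          simp only [Finset.mem_insert, Finset.mem_singleton]
          right; left; exact hr0.symm
    · -- type B
      have ne1s : (1 : ZMod n) ≠ (s : ZMod n) := nev _ _ (by rw [v1, vnat s (by omega)]; omega)
      have ne1s1 : (1 : ZMod n) ≠ (s : ZMod n) + 1 := nev _ _ (by rw [v1, vsucc s (by omega)]; omega)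
      have ness1 : (s : ZMod n) ≠ (s : ZMod n) + 1 :=
        nev _ _ (by rw [vnat s (by omega), vsucc s (by omega)]; omega)
      refine ⟨?_, ?_, ?_⟩
      · exact Finset.card_eq_three.mpr ⟨1, (s : ZMod n), (s : ZMod n) + 1, ne1s, ne1s1, ness1, rfl⟩
      · refine ⟨(s : ZMod n), 1, ?_, ?_⟩
        · rw [show (3 - 1 : ℕ) = 2 from rfl, cSeg_two]
          simp only [Finset.mem_insert, Finset.mem_singleton]
          push_neg
          exact ⟨ne1s, ne1s1⟩
        · rw [show (3 - 1 : ℕ) = 2 from rfl, cSeg_two]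
          ext x
          simp only [Finset.mem_union, Finset.mem_insert, Finset.mem_singleton]
          tauto
      · rintro ⟨r, hr⟩
        rw [cSeg_three] at hr
        have h1 : (1 : ZMod n) ∈ ({r, r + 1, r + 2} : Finset (ZMod n)) := by rw [← hr]; simp
        simp only [Finset.mem_insert, Finset.mem_singleton] at h1
        have hzero : (0 : ZMod n) ∉ ({1, (s : ZMod n), (s : ZMod n) + 1} : Finset (ZMod n)) := by
          simp only [Finset.mem_insert, Finset.mem_singleton]
          push_neg
          refine ⟨nev _ _ (by rw [v0, v1]; omega), nev _ _ (by rw [v0, vnat s (by omega)]; omega),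
            nev _ _ (by rw [v0, vsucc s (by omega)]; omega)⟩
        rcases h1 with h | h | h
        · -- r = 1
          rw [← h] at hr
          have hm' : (2 : ZMod n) ∈ ({(1 : ZMod n), (s : ZMod n), (s : ZMod n) + 1} : Finset (ZMod n)) := by
            rw [hr, show (1 : ZMod n) + 1 = 2 by norm_num]
            simp
          simp only [Finset.mem_insert, Finset.mem_singleton] at hm'
          rcases hm' with h' | h' | h'
          · exact absurd (congrArg ZMod.val h') (by rw [v1, v2]; omega)
          · exact absurd (congrArg ZMod.val h') (by rw [v2, vnat s (by omega)]; omega)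
          · exact absurd (congrArg ZMod.val h') (by rw [v2, vsucc s (by omega)]; omega)
        · have hr0 : r = 0 := by linear_combination -h
          apply hzero
          rw [hr, hr0]
          simp
        · have hr0 : r + 1 = 0 := by linear_combination -h
          apply hzero
          rw [hr]
          simp only [Finset.mem_insert, Finset.mem_singleton]
          right; left; exact hr0.symm
  · -- non-crossing
    intro I hI J hJ
    rw [hS, Finset.mem_union] at hI hJ
    simp only [Finset.mem_image, Finset.mem_Icc] at hI hJ
    have oneA : ∀ m : ℕ, (1 : ZMod n) ∈ ({1, 2, (m : ZMod n)} : Finset (ZMod n)) := by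
      intro m; simp
    have oneB : ∀ s : ℕ, (1 : ZMod n) ∈ ({1, (s : ZMod n), (s : ZMod n) + 1} : Finset (ZMod n)) := by
      intro s; simp
    have hone : (1 : ZMod n) ∈ I := by
      rcases hI with ⟨m, _, rfl⟩ | ⟨s, _, rfl⟩
      · exact oneA m
      · exact oneB s
    have honeJ : (1 : ZMod n) ∈ J := by
      rcases hJ with ⟨m, _, rfl⟩ | ⟨s, _, rfl⟩
      · exact oneA m
      · exact oneB s
    rcases hJ with ⟨m', hm', rfl⟩ | ⟨s', hs', rfl⟩
    · -- J type A
      rcases hI with ⟨m, hm, rfl⟩ | ⟨s, hs, rfl⟩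
      · -- I type A : J \ I ⊆ {m'}
        apply not_crossing_of_subset h1n (t := (m' : ZMod n))
        intro x hx
        rw [Finset.mem_sdiff] at hx
        obtain ⟨hx1, hx2⟩ := hx
        simp only [Finset.mem_insert, Finset.mem_singleton] at hx1 ⊢
        rcases hx1 with rfl | rfl | rfl
        · exact absurd (oneA m) hx2
        · exact absurd (by simp : (2 : ZMod n) ∈ ({1, 2, (m : ZMod n)} : Finset (ZMod n))) hx2
        · left; rfl
      · -- I type B : use symmetry, I \ J ⊆ {s, s+1}
        intro hcr
        refine not_crossing_of_subset h1n (t := (s : ZMod n)) ?_ (crossing_symm hcr)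
        intro x hx
        rw [Finset.mem_sdiff] at hx
        obtain ⟨hx1, hx2⟩ := hx
        simp only [Finset.mem_insert, Finset.mem_singleton] at hx1 ⊢
        rcases hx1 with rfl | rfl | rfl
        · exact absurd (oneA m') hx2
        · left; rfl
        · right; rfl
    · -- J type B : J \ I ⊆ {s', s'+1}
      apply not_crossing_of_subset h1n (t := (s' : ZMod n))
      intro x hx
      rw [Finset.mem_sdiff] at hx
      obtain ⟨hx1, hx2⟩ := hx
      simp only [Finset.mem_insert, Finset.mem_singleton] at hx1 ⊢
      rcases hx1 with rfl | rfl | rfl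
      · exact absurd hone hx2
      · left; rfl
      · right; rfl
end

section
/- Let a be a 2-frieze of height 3 and let i₀ ∈ ℤ be such that u := a(i₀+2, 1) satisfies u ≥ a(i,1) and u ≥ a(i,3) for every i ∈ ℤ. Set s := a(i₀, 1) and w := a(i₀+4, 1). Then (s−1)(w−1) < 2; equivalently, s = 1, or w = 1, or s = w = 2. -/
/-- A 2-frieze of height `h`: a function `a : ℤ × {0,…,h+1} → ℤ` with `a(i,0) = a(i,h+1) = 1`,
`a(i,j) ≥ 1` for `1 ≤ j ≤ h`, and `a(i,j) = a(i-1,j)·a(i+1,j) - a(i,j-1)·a(i,j+1)`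
for `1 ≤ j ≤ h`. -/
def Is2Frieze (h : ℕ) (a : ℤ → Fin (h + 2) → ℤ) : Prop :=
  (∀ i : ℤ, a i ⟨0, by omega⟩ = 1) ∧
  (∀ i : ℤ, a i ⟨h + 1, by omega⟩ = 1) ∧
  (∀ i : ℤ, ∀ j : ℕ, ∀ _ : 1 ≤ j, ∀ _ : j ≤ h, 1 ≤ a i ⟨j, by omega⟩) ∧
  (∀ i : ℤ, ∀ j : ℕ, ∀ _ : 1 ≤ j, ∀ _ : j ≤ h,
    a i ⟨j, by omega⟩ =
      a (i - 1) ⟨j, by omega⟩ * a (i + 1) ⟨j, by omega⟩ -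
        a i ⟨j - 1, by omega⟩ * a i ⟨j + 1, by omega⟩)

set_option maxHeartbeats 2000000 in
theorem statement11 (a : ℤ → Fin 5 → ℤ) (ha : Is2Frieze 3 a) (i₀ : ℤ)
    (hmax : ∀ i : ℤ, a i (1 : Fin 5) ≤ a (i₀ + 2) (1 : Fin 5) ∧
      a i (3 : Fin 5) ≤ a (i₀ + 2) (1 : Fin 5)) :
    (a i₀ (1 : Fin 5) - 1) * (a (i₀ + 4) (1 : Fin 5) - 1) < 2 ∧
    (a i₀ (1 : Fin 5) = 1 ∨ a (i₀ + 4) (1 : Fin 5) = 1 ∨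
      (a i₀ (1 : Fin 5) = 2 ∧ a (i₀ + 4) (1 : Fin 5) = 2)) := by
  obtain ⟨h0, h4, hpos, hrec⟩ := ha
  -- Fin normalization lemmas
  have g1 : ∀ p : (1 : ℕ) < 5, (⟨1, p⟩ : Fin 5) = 1 := fun _ => rfl
  have g0 : ∀ p : (1 - 1 : ℕ) < 5, (⟨1 - 1, p⟩ : Fin 5) = 0 := fun _ => rfl
  have g2 : ∀ p : (1 + 1 : ℕ) < 5, (⟨1 + 1, p⟩ : Fin 5) = 2 := fun _ => rfl
  have g2' : ∀ p : (2 : ℕ) < 5, (⟨2, p⟩ : Fin 5) = 2 := fun _ => rfl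
  have g1' : ∀ p : (2 - 1 : ℕ) < 5, (⟨2 - 1, p⟩ : Fin 5) = 1 := fun _ => rfl
  have g3 : ∀ p : (2 + 1 : ℕ) < 5, (⟨2 + 1, p⟩ : Fin 5) = 3 := fun _ => rfl
  have g3' : ∀ p : (3 : ℕ) < 5, (⟨3, p⟩ : Fin 5) = 3 := fun _ => rfl
  have h0' : ∀ i : ℤ, a i (0 : Fin 5) = 1 := h0
  -- notation
  set u := a (i₀ + 2) (1 : Fin 5) with hu
  set s := a i₀ (1 : Fin 5) with hs
  set w := a (i₀ + 4) (1 : Fin 5) with hw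
  set b1 := a (i₀ + 1) (1 : Fin 5) with hb1
  set b3 := a (i₀ + 3) (1 : Fin 5) with hb3
  set c1 := a (i₀ + 1) (2 : Fin 5) with hc1
  set c2 := a (i₀ + 2) (2 : Fin 5) with hc2
  set c3 := a (i₀ + 3) (2 : Fin 5) with hc3
  set d2 := a (i₀ + 2) (3 : Fin 5) with hd2
  -- row-1 recurrence at i₀+1, i₀+2, i₀+3
  have E1 : b1 = s * u - c1 := by
    have h := hrec (i₀ + 1) 1 (by omega) (by omega)
    rw [show i₀ + 1 - 1 = i₀ by ring, show i₀ + 1 + 1 = i₀ + 2 by ring] at h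
    simp only [g1, g0, g2, h0', one_mul] at h
    exact h
  have E2 : u = b1 * b3 - c2 := by
    have h := hrec (i₀ + 2) 1 (by omega) (by omega)
    rw [show i₀ + 2 - 1 = i₀ + 1 by ring, show i₀ + 2 + 1 = i₀ + 3 by ring] at h
    simp only [g1, g0, g2, h0', one_mul] at h
    exact h
  have E3 : b3 = u * w - c3 := by
    have h := hrec (i₀ + 3) 1 (by omega) (by omega)
    rw [show i₀ + 3 - 1 = i₀ + 2 by ring, show i₀ + 3 + 1 = i₀ + 4 by ring] at h
    simp only [g1, g0, g2, h0', one_mul] at h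
    exact h
  -- row-2 recurrence at i₀+2
  have E4 : c2 = c1 * c3 - u * d2 := by
    have h := hrec (i₀ + 2) 2 (by omega) (by omega)
    rw [show i₀ + 2 - 1 = i₀ + 1 by ring, show i₀ + 2 + 1 = i₀ + 3 by ring] at h
    simp only [g2', g1', g3] at h
    exact h
  -- positivity
  have pu : 1 ≤ u := by rw [hu, ← g1 (by omega)]; exact hpos _ 1 (by omega) (by omega)
  have ps : 1 ≤ s := by rw [hs, ← g1 (by omega)]; exact hpos _ 1 (by omega) (by omega)
  have pw : 1 ≤ w := by rw [hw, ← g1 (by omega)]; exact hpos _ 1 (by omega) (by omega)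
  have pb1 : 1 ≤ b1 := by rw [hb1, ← g1 (by omega)]; exact hpos _ 1 (by omega) (by omega)
  have pb3 : 1 ≤ b3 := by rw [hb3, ← g1 (by omega)]; exact hpos _ 1 (by omega) (by omega)
  have pc1 : 1 ≤ c1 := by rw [hc1, ← g2' (by omega)]; exact hpos _ 2 (by omega) (by omega)
  have pc3 : 1 ≤ c3 := by rw [hc3, ← g2' (by omega)]; exact hpos _ 2 (by omega) (by omega)
  have pd2 : 1 ≤ d2 := by rw [hd2, ← g3' (by omega)]; exact hpos _ 3 (by omega) (by omega)
  -- maximality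
  have mb1 : b1 ≤ u := (hmax (i₀ + 1)).1
  have mb3 : b3 ≤ u := (hmax (i₀ + 3)).1
  have md2 : d2 ≤ u := (hmax (i₀ + 2)).2
  -- key bounds
  have hc1' : (s - 1) * u ≤ c1 := by nlinarith
  have hc3' : (w - 1) * u ≤ c3 := by nlinarith
  have hcc : c1 * c3 ≤ 2 * u * u - u := by nlinarith
  have hprod : (s - 1) * (w - 1) * (u * u) ≤ c1 * c3 := by
    have h1 : 0 ≤ (s - 1) * u := by nlinarith
    have h2 : 0 ≤ (w - 1) * u := by nlinarith
    calc (s - 1) * (w - 1) * (u * u) = ((s - 1) * u) * ((w - 1) * u) := by ring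
    _ ≤ c1 * c3 := mul_le_mul hc1' hc3' h2 (le_trans h1 hc1')
  have key : (s - 1) * (w - 1) < 2 := by nlinarith
  refine ⟨key, ?_⟩
  by_cases hseq : s = 1
  · exact Or.inl hseq
  by_cases hweq : w = 1
  · exact Or.inr (Or.inl hweq)
  refine Or.inr (Or.inr ?_)
  have hs2 : 2 ≤ s := by omega
  have hw2 : 2 ≤ w := by omega
  have hsle : s ≤ 2 := by nlinarith
  have hwle : w ≤ 2 := by nlinarith
  omega
end

section
/- Let a be a 2-frieze of height 3 and let i₀ ∈ ℤ be such that u := a(i₀+2, 1) satisfies u ≥ a(i,1) and u ≥ a(i,3) for every i ∈ ℤ. If a(i₀,1) = 2 and a(i₀+4,1) = 2, then (a(i₀,1), a(i₀+1,1), a(i₀+2,1), a(i₀+3,1), a(i₀+4,1), a(i₀+5,1)) = (2, 4, 5, 4, 2, 1). -/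
lemma key12 (u p q m w z1 z3 : ℤ)
    (hu : 2 ≤ u)
    (hp : 1 ≤ p) (hp' : p ≤ u) (hq : 1 ≤ q) (hq' : q ≤ u)
    (hm : 1 ≤ m) (hm' : m ≤ u) (hw5 : 1 ≤ w) (hw5' : w ≤ u)
    (hz1 : 1 ≤ z1) (hz1' : z1 ≤ u) (hz3 : 1 ≤ z3) (hz3' : z3 ≤ u)
    (hA : 4*u - 2*(p+q) + 1 ≤ u)
    (hA' : 1 ≤ 4*u - 2*(p+q) + 1)
    (hB : 1 ≤ p*q - u)
    (e3 : z1 = m*(p*q - u) - 2*q + 1)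
    (e4 : z3 = w*(p*q - u) - 2*p + 1)
    (e5 : z1*z3 = p*q - u + (4*u - 2*(p+q) + 1)) :
    u = 5 ∧ p = 4 ∧ q = 4 ∧ w = 1 := by
  have hy : p*q - u ≤ 3*u - 1 := by nlinarith [mul_nonneg (sub_nonneg.2 hm : (0:ℤ) ≤ m - 1) (by linarith : (0:ℤ) ≤ p*q - u)]
  have hub : u ≤ 6 := by nlinarith [mul_nonneg (sub_nonneg.2 hp') (sub_nonneg.2 hq')]
  interval_cases u <;> interval_cases p <;> interval_cases q <;> interval_cases z1 <;> omega

theorem statement12 (a : ℤ → Fin 5 → ℤ) (ha : Is2Frieze 3 a) (i₀ : ℤ)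
    (hmax : ∀ i : ℤ, a i (1 : Fin 5) ≤ a (i₀ + 2) (1 : Fin 5) ∧
      a i (3 : Fin 5) ≤ a (i₀ + 2) (1 : Fin 5))
    (hs : a i₀ (1 : Fin 5) = 2) (hw : a (i₀ + 4) (1 : Fin 5) = 2) :
    a i₀ (1 : Fin 5) = 2 ∧ a (i₀ + 1) (1 : Fin 5) = 4 ∧ a (i₀ + 2) (1 : Fin 5) = 5 ∧
    a (i₀ + 3) (1 : Fin 5) = 4 ∧ a (i₀ + 4) (1 : Fin 5) = 2 ∧ a (i₀ + 5) (1 : Fin 5) = 1 := by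
  obtain ⟨h0, h4, hpos, hrec⟩ := ha
  have h0' : ∀ i : ℤ, a i (0 : Fin 5) = 1 := h0
  have h4' : ∀ i : ℤ, a i (4 : Fin 5) = 1 := h4
  have pos1 : ∀ i : ℤ, 1 ≤ a i (1 : Fin 5) := fun i => hpos i 1 (by norm_num) (by norm_num)
  have pos3 : ∀ i : ℤ, 1 ≤ a i (3 : Fin 5) := fun i => hpos i 3 (by norm_num) (by norm_num)
  have rec1 : ∀ i : ℤ, a i (1 : Fin 5)
      = a (i-1) (1 : Fin 5) * a (i+1) (1 : Fin 5) - a i (0 : Fin 5) * a i (2 : Fin 5) :=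
    fun i => hrec i 1 (by norm_num) (by norm_num)
  have rec2 : ∀ i : ℤ, a i (2 : Fin 5)
      = a (i-1) (2 : Fin 5) * a (i+1) (2 : Fin 5) - a i (1 : Fin 5) * a i (3 : Fin 5) :=
    fun i => hrec i 2 (by norm_num) (by norm_num)
  have rec3 : ∀ i : ℤ, a i (3 : Fin 5)
      = a (i-1) (3 : Fin 5) * a (i+1) (3 : Fin 5) - a i (2 : Fin 5) * a i (4 : Fin 5) :=
    fun i => hrec i 3 (by norm_num) (by norm_num)
  -- abbreviations
  set u := a (i₀ + 2) (1 : Fin 5) with hu_def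
  set p := a (i₀ + 1) (1 : Fin 5) with hp_def
  set q := a (i₀ + 3) (1 : Fin 5) with hq_def
  set m := a (i₀ - 1) (1 : Fin 5) with hm_def
  set w := a (i₀ + 5) (1 : Fin 5) with hw_def
  -- row 2 values via rec1
  have E0 : a i₀ (2 : Fin 5) = m * p - 2 := by
    have := rec1 i₀; rw [h0' i₀] at this
    have h1 : i₀ + 1 = i₀ + 1 := rfl
    rw [hs] at this; linarith [this]
  have E1 : a (i₀+1) (2 : Fin 5) = 2 * u - p := by
    have := rec1 (i₀+1)
    rw [h0'] at this
    have e : i₀ + 1 - 1 = i₀ := by ring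
    have e2 : i₀ + 1 + 1 = i₀ + 2 := by ring
    rw [e, e2, hs] at this; linarith [this]
  have E2 : a (i₀+2) (2 : Fin 5) = p * q - u := by
    have := rec1 (i₀+2)
    rw [h0'] at this
    have e : i₀ + 2 - 1 = i₀ + 1 := by ring
    have e2 : i₀ + 2 + 1 = i₀ + 3 := by ring
    rw [e, e2] at this; linarith [this]
  have E3 : a (i₀+3) (2 : Fin 5) = 2 * u - q := by
    have := rec1 (i₀+3)
    rw [h0'] at this
    have e : i₀ + 3 - 1 = i₀ + 2 := by ring
    have e2 : i₀ + 3 + 1 = i₀ + 4 := by ring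
    rw [e, e2, hw] at this; linarith [this]
  have E4 : a (i₀+4) (2 : Fin 5) = q * w - 2 := by
    have := rec1 (i₀+4)
    rw [h0'] at this
    have e : i₀ + 4 - 1 = i₀ + 3 := by ring
    have e2 : i₀ + 4 + 1 = i₀ + 5 := by ring
    rw [e, e2, hw] at this; linarith [this]
  -- middle row relations
  have M1 : (m * p - 2) * (p * q - u) = (2 * u - p) + p * a (i₀+1) (3 : Fin 5) := by
    have := rec2 (i₀+1)
    have e : i₀ + 1 - 1 = i₀ := by ring
    have e2 : i₀ + 1 + 1 = i₀ + 2 := by ring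
    rw [e, e2, E0, E1, E2] at this; linarith [this]
  have M2 : (2 * u - p) * (2 * u - q) = (p * q - u) + u * a (i₀+2) (3 : Fin 5) := by
    have := rec2 (i₀+2)
    have e : i₀ + 2 - 1 = i₀ + 1 := by ring
    have e2 : i₀ + 2 + 1 = i₀ + 3 := by ring
    rw [e, e2, E1, E2, E3] at this; linarith [this]
  have M3 : (p * q - u) * (q * w - 2) = (2 * u - q) + q * a (i₀+3) (3 : Fin 5) := by
    have := rec2 (i₀+3)
    have e : i₀ + 3 - 1 = i₀ + 2 := by ring
    have e2 : i₀ + 3 + 1 = i₀ + 4 := by ring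
    rw [e, e2, E2, E3, E4] at this; linarith [this]
  -- third row relation at i₀+2
  have R3 : a (i₀+2) (3 : Fin 5)
      = a (i₀+1) (3 : Fin 5) * a (i₀+3) (3 : Fin 5) - (p * q - u) := by
    have := rec3 (i₀+2)
    have e : i₀ + 2 - 1 = i₀ + 1 := by ring
    have e2 : i₀ + 2 + 1 = i₀ + 3 := by ring
    rw [e, e2, E2, h4'] at this; linarith [this]
  -- bounds
  have hu2 : (2:ℤ) ≤ u := hs ▸ (hmax i₀).1
  have hp1 : 1 ≤ p := pos1 _
  have hq1 : 1 ≤ q := pos1 _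
  have hm1 : 1 ≤ m := pos1 _
  have hw1 : 1 ≤ w := pos1 _
  have hp' : p ≤ u := (hmax (i₀+1)).1
  have hq' : q ≤ u := (hmax (i₀+3)).1
  have hm' : m ≤ u := (hmax (i₀-1)).1
  have hw' : w ≤ u := (hmax (i₀+5)).1
  have hz1 : 1 ≤ a (i₀+1) (3 : Fin 5) := pos3 _
  have hz1' : a (i₀+1) (3 : Fin 5) ≤ u := (hmax (i₀+1)).2
  have hz2 : 1 ≤ a (i₀+2) (3 : Fin 5) := pos3 _
  have hz2' : a (i₀+2) (3 : Fin 5) ≤ u := (hmax (i₀+2)).2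
  have hz3 : 1 ≤ a (i₀+3) (3 : Fin 5) := pos3 _
  have hz3' : a (i₀+3) (3 : Fin 5) ≤ u := (hmax (i₀+3)).2
  have hy2 : 1 ≤ p * q - u := by
    have := hpos (i₀+2) 2 (by norm_num) (by norm_num)
    rw [show ((⟨2, by omega⟩ : Fin 5)) = (2 : Fin 5) from rfl, E2] at this
    exact this
  have hu0 : u ≠ 0 := by omega
  -- z2 formula
  have Z2 : a (i₀+2) (3 : Fin 5) = 4*u - 2*(p+q) + 1 := by
    have key : u * a (i₀+2) (3 : Fin 5) = u * (4*u - 2*(p+q) + 1) := by linear_combination -M2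
    exact mul_left_cancel₀ hu0 key
  have hp0 : p ≠ 0 := by omega
  have hq0 : q ≠ 0 := by omega
  have Z1 : a (i₀+1) (3 : Fin 5) = m * (p*q - u) - 2*q + 1 := by
    have key : p * a (i₀+1) (3 : Fin 5) = p * (m * (p*q - u) - 2*q + 1) := by linear_combination -M1
    exact mul_left_cancel₀ hp0 key
  have Z3 : a (i₀+3) (3 : Fin 5) = w * (p*q - u) - 2*p + 1 := by
    have key : q * a (i₀+3) (3 : Fin 5) = q * (w * (p*q - u) - 2*p + 1) := by linear_combination -M3
    exact mul_left_cancel₀ hq0 key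
  have E5 : a (i₀+1) (3 : Fin 5) * a (i₀+3) (3 : Fin 5) = p*q - u + (4*u - 2*(p+q) + 1) := by
    rw [← Z2]; linarith [R3]
  have hA : 4*u - 2*(p+q) + 1 ≤ u := Z2 ▸ hz2'
  have hA' : (1:ℤ) ≤ 4*u - 2*(p+q) + 1 := Z2 ▸ hz2
  obtain ⟨r1, r2, r3, r4⟩ := key12 u p q m w (a (i₀+1) (3 : Fin 5)) (a (i₀+3) (3 : Fin 5))
    hu2 hp1 hp' hq1 hq' hm1 hm' hw1 hw' hz1 hz1' hz3 hz3' hA hA' hy2 Z1 Z3 E5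
  exact ⟨hs, r2, r1, r3, hw, r4⟩
end

section
/- If a and a′ are 2-friezes of height 3 such that a(i,j) = a′(i,j) for all i ∈ {0,1} and all j ∈ {1,2,3}, then a = a′. In other words, a 2-frieze of height 3 is uniquely determined by the six entries in two adjacent columns. -/
/-! The frieze rule solves for `a(i-1,j) · a(i+1,j)` in terms of column `i`; since every interior
entry is positive, either factor is then determined by the other. Hence two adjacent columns
determine the next column on either side, and two-sided induction along `ℤ` does the rest. -/

theorem Int.forall_of_two_consecutive {P : ℤ → Prop} (h0 : P 0) (h1 : P 1)
    (succ : ∀ i, P (i - 1) → P i → P (i + 1)) (pred : ∀ i, P i → P (i + 1) → P (i - 1))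
    (i : ℤ) : P i := by
  suffices ∀ i, P i ∧ P (i + 1) from (this i).1
  intro i
  induction i using Int.induction_on with
  | zero => exact ⟨h0, h1⟩
  | succ k ih => exact ⟨ih.2, by simpa using succ (k + 1) (by simpa using ih.1) ih.2⟩
  | pred k ih => exact ⟨pred _ ih.1 ih.2, by simpa using ih.1⟩

namespace Is2Frieze

variable {h : ℕ} {a a' : ℤ → Fin (h + 2) → ℤ}

theorem column_eq_of_interior (ha : Is2Frieze h a) (ha' : Is2Frieze h a') {i : ℤ}
    (hint : ∀ j : Fin (h + 2), 1 ≤ (j : ℕ) → (j : ℕ) ≤ h → a i j = a' i j) : a i = a' i := by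
  funext ⟨j, hj⟩
  rcases Nat.eq_zero_or_pos j with rfl | hpos
  · rw [ha.1, ha'.1]
  rcases (show j ≤ h ∨ j = h + 1 by omega) with hle | rfl
  · exact hint _ hpos hle
  · rw [ha.2.1, ha'.2.1]

theorem mul_neighbors_eq (ha : Is2Frieze h a) (ha' : Is2Frieze h a') {i : ℤ} (hi : a i = a' i)
    {j : ℕ} (hj1 : 1 ≤ j) (hjh : j ≤ h) :
    a (i - 1) ⟨j, by omega⟩ * a (i + 1) ⟨j, by omega⟩ =
      a' (i - 1) ⟨j, by omega⟩ * a' (i + 1) ⟨j, by omega⟩ := by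
  have e := ha.2.2.2 i j hj1 hjh
  have e' := ha'.2.2.2 i j hj1 hjh
  rw [hi] at e
  linarith

theorem ne_zero (ha : Is2Frieze h a) (i : ℤ) {j : ℕ} (hj1 : 1 ≤ j) (hjh : j ≤ h) :
    a i ⟨j, by omega⟩ ≠ 0 :=
  (zero_lt_one.trans_le (ha.2.2.1 i j hj1 hjh)).ne'

theorem column_succ_eq (ha : Is2Frieze h a) (ha' : Is2Frieze h a') {i : ℤ}
    (hpred : a (i - 1) = a' (i - 1)) (hi : a i = a' i) : a (i + 1) = a' (i + 1) := by
  refine column_eq_of_interior ha ha' fun ⟨j, _⟩ hj1 hjh => ?_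
  have e := mul_neighbors_eq ha ha' hi hj1 hjh
  rw [hpred] at e
  exact mul_left_cancel₀ (ha'.ne_zero _ hj1 hjh) e

theorem column_pred_eq (ha : Is2Frieze h a) (ha' : Is2Frieze h a') {i : ℤ}
    (hi : a i = a' i) (hsucc : a (i + 1) = a' (i + 1)) : a (i - 1) = a' (i - 1) := by
  refine column_eq_of_interior ha ha' fun ⟨j, _⟩ hj1 hjh => ?_
  have e := mul_neighbors_eq ha ha' hi hj1 hjh
  rw [hsucc] at e
  exact mul_right_cancel₀ (ha'.ne_zero _ hj1 hjh) e

theorem eq_of_columns_zero_one (ha : Is2Frieze h a) (ha' : Is2Frieze h a')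
    (h0 : a 0 = a' 0) (h1 : a 1 = a' 1) : a = a' :=
  funext <| Int.forall_of_two_consecutive h0 h1
    (fun _ => column_succ_eq ha ha') (fun _ => column_pred_eq ha ha')

end Is2Frieze

theorem statement13 (a a' : ℤ → Fin 5 → ℤ) (ha : Is2Frieze 3 a) (ha' : Is2Frieze 3 a')
    (hagree : ∀ i : ℤ, (i = 0 ∨ i = 1) → ∀ j : Fin 5,
      ((j : ℕ) = 1 ∨ (j : ℕ) = 2 ∨ (j : ℕ) = 3) → a i j = a' i j) :
    a = a' := by
  have column_eq : ∀ i : ℤ, (i = 0 ∨ i = 1) → a i = a' i := fun i hi =>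
    ha.column_eq_of_interior ha' fun j hj1 hj3 => hagree i hi j (by omega)
  exact ha.eq_of_columns_zero_one ha' (column_eq 0 (by simp)) (column_eq 1 (by simp))
end
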